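/- arXiv:1904.04674 — 6 statements merged into one kernel-verified Lean document; each statement's English description precedes it below -/
import Mathlib

section
/- For real numbers μ̲ ≤ μ̄ and φ : ℝ → ℝ bounded and Lipschitz, the function v(x,t) := sup_{y ∈ [μ̲, μ̄]} φ(x + t y) satisfies the semigroup identity v(x, t + δ) = sup_{y ∈ [μ̲, μ̄]} v(x + δ y, t) for all x ∈ ℝ and t, δ ≥ 0. -/
open Set

theorem lln_semigroup
    (μl μu : ℝ) (hμ : μl ≤ μu)
    (φ : ℝ → ℝ) (hb : ∃ B, ∀ x, |φ x| ≤ B) (hlip : ∃ K, LipschitzWith K φ)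
    (v : ℝ → ℝ → ℝ)
    (hv : ∀ x t, v x t = sSup ((fun y => φ (x + t * y)) '' Icc μl μu)) :
    ∀ x t δ : ℝ, 0 ≤ t → 0 ≤ δ →
      v x (t + δ) = sSup ((fun y => v (x + δ * y) t) '' Icc μl μu) := by
  obtain ⟨B, hB⟩ := hb
  have hB0 : 0 ≤ B := le_trans (abs_nonneg _) (hB 0)
  have hne : (Icc μl μu).Nonempty := ⟨μl, le_refl _, hμ⟩
  have hbdd : ∀ f : ℝ → ℝ, (∀ y, f y ≤ B) → BddAbove (f '' Icc μl μu) := by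
    intro f hf
    exact ⟨B, by rintro _ ⟨y, hy, rfl⟩; exact hf y⟩
  have hφbdd : ∀ a s : ℝ, BddAbove ((fun y => φ (a + s * y)) '' Icc μl μu) :=
    fun a s => hbdd _ (fun y => (abs_le.1 (hB _)).2)
  have hvB : ∀ a s, v a s ≤ B := by
    intro a s
    rw [hv]
    exact Real.sSup_le (by rintro _ ⟨y, hy, rfl⟩; exact (abs_le.1 (hB _)).2) hB0
  intro x t δ ht hδ
  rw [hv]
  apply le_antisymm
  · apply csSup_le (hne.image _)
    rintro _ ⟨y, hy, rfl⟩
    have h1 : φ (x + (t + δ) * y) ≤ v (x + δ * y) t := by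
      rw [hv]
      have : x + (t + δ) * y = (x + δ * y) + t * y := by ring
      rw [this]
      exact le_csSup (hφbdd _ _) ⟨y, hy, rfl⟩
    exact h1.trans (le_csSup (hbdd _ (fun y => hvB _ _)) ⟨y, hy, rfl⟩)
  · apply csSup_le (hne.image _)
    rintro _ ⟨y, hy, rfl⟩
    show v (x + δ * y) t ≤ _
    rw [hv]
    apply csSup_le (hne.image _)
    rintro _ ⟨z, hz, rfl⟩
    show φ (x + δ * y + t * z) ≤ _
    rcases eq_or_lt_of_le (add_nonneg ht hδ) with h0 | h0
    · obtain ⟨ht0, hδ0⟩ : t = 0 ∧ δ = 0 := by constructor <;> linarith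
      subst ht0; subst hδ0
      have : x + 0 * y + 0 * z = x + (0 + 0) * μl := by ring
      rw [this]
      exact le_csSup (hφbdd _ _) ⟨μl, ⟨le_refl _, hμ⟩, rfl⟩
    · set w := (δ * y + t * z) / (t + δ) with hw
      have hwmem : w ∈ Icc μl μu := by
        constructor
        · rw [hw, le_div_iff₀ h0]
          nlinarith [hy.1, hz.1]
        · rw [hw, div_le_iff₀ h0]
          nlinarith [hy.2, hz.2]
      have : x + δ * y + t * z = x + (t + δ) * w := by
        rw [hw]; field_simp; ring
      rw [this]
      exact le_csSup (hφbdd _ _) ⟨w, hwmem, rfl⟩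
end

section
/- For real numbers μ̲ ≤ μ̄ and φ : ℝ → ℝ continuously differentiable, if v(x,t) := sup_{y ∈ [μ̲, μ̄]} φ(x + t y) is differentiable at a point (x,t) with t > 0, then ∂_t v(x,t) = p(∂_x v(x,t)), where p(a) = sup_{y ∈ [μ̲, μ̄]} (y a) = max(a μ̄, a μ̲). (That is, v is a classical solution of the Hamilton–Jacobi equation ∂_t v − p(∂_x v) = 0 wherever it is differentiable.) -/
/-!
Let `y*` maximize `y ↦ φ (x + t y)` over `[μ̲, μ̄]` and put `z = x + t y*`. Then
`v x' t' ≥ φ z = v x t` at every point `(x', t')` from which `z` is reached with a speed in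
`[μ̲, μ̄]`, so `v` restricted to such a set is minimal at `(x, t)`. Along the characteristic line
`s ↦ (x + s y*, t - s)` this gives `∂ₜv = y* ∂ₓv`; along the rays `s ↦ (x - s y, t + s)`, `s ≥ 0`,
for `y ∈ [μ̲, μ̄]` (admissible by convexity, as `t ≥ 0`), it gives `∂ₜv ≥ y ∂ₓv`.
-/

open Set

theorem HasFDerivAt.nonneg_apply_of_le_add_smul {E : Type*} [NormedAddCommGroup E]
    [NormedSpace ℝ E] {f : E → ℝ} {f' : E →L[ℝ] ℝ} {a d : E} (hf : HasFDerivAt f f' a)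
    (h : ∀ s ∈ Icc (0 : ℝ) 1, f a ≤ f (a + s • d)) : 0 ≤ f' d := by
  have hseg : segment ℝ a (a + d) ⊆ {b | f a ≤ f b} := by
    rw [segment_eq_image']
    rintro _ ⟨s, hs, rfl⟩
    simpa using h s hs
  exact (isMinOn_iff.2 fun _ hb => hb).localize.hasFDerivWithinAt_nonneg hf.hasFDerivWithinAt
    (mem_posTangentConeAt_of_segment_subset hseg)

theorem ContinuousLinearMap.apply_prod_eq {L : ℝ × ℝ →L[ℝ] ℝ} (a b : ℝ) :
    L (a, b) = a * L (1, 0) + b * L (0, 1) := by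
  rw [show ((a, b) : ℝ × ℝ) = a • (1, 0) + b • (0, 1) by simp, map_add, map_smul, map_smul,
    smul_eq_mul, smul_eq_mul]

theorem isGreatest_mul_image_Icc {a l u : ℝ} (h : l ≤ u) :
    IsGreatest ((a * ·) '' Icc l u) (max (a * u) (a * l)) := by
  refine ⟨?_, ?_⟩
  · rcases max_choice (a * u) (a * l) with hmax | hmax <;> rw [hmax]
    exacts [⟨u, right_mem_Icc.2 h, rfl⟩, ⟨l, left_mem_Icc.2 h, rfl⟩]
  · rintro _ ⟨y, hy, rfl⟩
    rcases le_total 0 a with ha | ha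
    · exact (mul_le_mul_of_nonneg_left hy.2 ha).trans (le_max_left _ _)
    · exact (mul_le_mul_of_nonpos_left hy.1 ha).trans (le_max_right _ _)

noncomputable def driftSup (φ : ℝ → ℝ) (K : Set ℝ) (x t : ℝ) : ℝ :=
  sSup ((fun y => φ (x + t * y)) '' K)

section DriftSup

variable {φ : ℝ → ℝ} {K : Set ℝ} {x t : ℝ}

theorem le_driftSup (hφ : Continuous φ) (hK : IsCompact K) {y : ℝ} (hy : y ∈ K) :
    φ (x + t * y) ≤ driftSup φ K x t :=
  le_csSup ((hK.image (by fun_prop)).bddAbove) (mem_image_of_mem _ hy)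

theorem exists_driftSup_eq (hφ : Continuous φ) (hK : IsCompact K) (hne : K.Nonempty) :
    ∃ y ∈ K, driftSup φ K x t = φ (x + t * y) := by
  obtain ⟨y, hy, hmax⟩ :=
    (hK.image (f := fun y => φ (x + t * y)) (by fun_prop)).sSup_mem (hne.image _)
  exact ⟨y, hy, hmax.symm⟩

theorem driftSup_le_driftSup (hφ : Continuous φ) (hK : IsCompact K) {y c x' t' : ℝ}
    (hy : driftSup φ K x t = φ (x + t * y)) (hc : c ∈ K) (h : x' + t' * c = x + t * y) :
    driftSup φ K x t ≤ driftSup φ K x' t' := by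
  rw [hy, ← h]
  exact le_driftSup hφ hK hc

theorem isGreatest_fderiv_driftSup (hφ : Continuous φ) (hK : IsCompact K) (hKc : Convex ℝ K)
    (hne : K.Nonempty) (ht : 0 ≤ t) {D : ℝ × ℝ →L[ℝ] ℝ}
    (hD : HasFDerivAt (fun p : ℝ × ℝ => driftSup φ K p.1 p.2) D (x, t)) :
    IsGreatest ((D (1, 0) * ·) '' K) (D (0, 1)) := by
  obtain ⟨ys, hys, hmax⟩ := exists_driftSup_eq (x := x) (t := t) hφ hK hne
  refine ⟨⟨ys, hys, ?_⟩, ?_⟩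
  · have hfwd := hD.nonneg_apply_of_le_add_smul (d := (ys, -1)) fun s _ =>
      driftSup_le_driftSup hφ hK hmax hys (by
        simp only [Prod.smul_mk, smul_eq_mul, Prod.fst_add, Prod.snd_add]; ring)
    have hbwd := hD.nonneg_apply_of_le_add_smul (d := (-ys, 1)) fun s _ =>
      driftSup_le_driftSup hφ hK hmax hys (by
        simp only [Prod.smul_mk, smul_eq_mul, Prod.fst_add, Prod.snd_add]; ring)
    rw [ContinuousLinearMap.apply_prod_eq] at hfwd hbwd
    linarith
  · rintro _ ⟨y, hy, rfl⟩
    have hray := hD.nonneg_apply_of_le_add_smul (d := (-y, 1)) fun s hs => by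
      obtain ⟨c, hc, hcomb⟩ := hKc.exists_mem_add_smul_eq hys hy ht hs.1
      refine driftSup_le_driftSup hφ hK hmax hc ?_
      simp only [smul_eq_mul] at hcomb
      simp only [Prod.smul_mk, smul_eq_mul, Prod.fst_add, Prod.snd_add]
      linear_combination hcomb
    rw [ContinuousLinearMap.apply_prod_eq] at hray
    linarith

end DriftSup

theorem lln_v_solves_HJ_general
    (μl μu : ℝ) (hμ : μl ≤ μu)
    (φ : ℝ → ℝ) (hC1 : ContDiff ℝ 1 φ)
    (v : ℝ → ℝ → ℝ)
    (hv : ∀ x t, v x t = sSup ((fun y => φ (x + t * y)) '' Icc μl μu))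
    (x t : ℝ) (ht : 0 < t)
    (D : ℝ × ℝ →L[ℝ] ℝ)
    (hD : HasFDerivAt (fun p : ℝ × ℝ => v p.1 p.2) D (x, t)) :
    D (0, 1) = max (D (1, 0) * μu) (D (1, 0) * μl) := by
  have hv' : (fun p : ℝ × ℝ => v p.1 p.2) = fun p => driftSup φ (Icc μl μu) p.1 p.2 :=
    funext fun p => hv p.1 p.2
  rw [hv'] at hD
  exact (isGreatest_fderiv_driftSup hC1.continuous isCompact_Icc (convex_Icc μl μu)
    (nonempty_Icc.2 hμ) ht.le hD).unique (isGreatest_mul_image_Icc hμ)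

theorem lln_v_solves_HJ
    (μl μu : ℝ) (hμ : μl ≤ μu)
    (φ : ℝ → ℝ) (hb : ∃ B, ∀ x, |φ x| ≤ B) (hC1 : ContDiff ℝ 1 φ)
    (v : ℝ → ℝ → ℝ)
    (hv : ∀ x t, v x t = sSup ((fun y => φ (x + t * y)) '' Icc μl μu))
    (x t : ℝ) (ht : 0 < t)
    (D : ℝ × ℝ →L[ℝ] ℝ)
    (hD : HasFDerivAt (fun p : ℝ × ℝ => v p.1 p.2) D (x, t)) :
    D (0, 1) = max (D (1, 0) * μu) (D (1, 0) * μl) :=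
  lln_v_solves_HJ_general μl μu hμ φ hC1 v hv x t ht D hD
end

section
/- Let Θ be a nonempty set of Borel probability measures on ℝ with sup_{μ ∈ Θ} ∫ |x|^{1+α} dμ < ∞ for some α ∈ (0,1]. Define N[φ] = sup_{μ ∈ Θ} ∫ φ dμ and p_ξ(a) = N[a·x] for a ∈ ℝ. Let φ : ℝ → ℝ be C¹ with bounded derivative whose derivative is α-Hölder with constant [φ']_α. If μ ∈ Θ attains the supremum, i.e. ∫ φ dμ = N[φ], then |∫ (x φ'(x) − p_ξ(φ'(x))) dμ(x)| ≤ 4 [φ']_α · sup_{ν ∈ Θ} ∫ |x|^{1+α} dν. -/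
open Set MeasureTheory

/-!
Taylor's formula with α-Hölder remainder gives, for every `ν ∈ Θ` and every `x`,
`∫ φ dν = φ x + φ' x * (∫ y dν - x) + E`, with `|E| ≤ L 2^α (|x|^(1+α) + M)` and `M` the moment bound.
Taking `ν = μ` and `p a ≥ a ∫ y dμ` bounds `x φ' x - p (φ' x)` above by `φ x - ∫ φ dμ + E`; taking the
supremum over `ν` and using that `μ` maximises `ν ↦ ∫ φ dν` bounds it below by `φ x - ∫ φ dμ - E`.
Integrating against `μ`, the centred term `φ - ∫ φ dμ` drops out and what is left is at most
`L 2^α (∫ |x|^(1+α) dμ + M) ≤ 4 L M`.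
-/

theorem abs_sub_sub_deriv_mul_le_of_holder {f : ℝ → ℝ} (hf : Differentiable ℝ f) {L α : ℝ}
    (hL : 0 ≤ L) (hα : 0 ≤ α) (hHolder : ∀ x y, |deriv f x - deriv f y| ≤ L * |x - y| ^ α)
    (x y : ℝ) : |f y - f x - deriv f x * (y - x)| ≤ L * |y - x| ^ (1 + α) := by
  have hderiv : ∀ t ∈ uIcc x y, HasDerivWithinAt (fun t => f t - f x - deriv f x * (t - x))
      (deriv f t - deriv f x) (uIcc x y) t := fun t _ => by
    have h : HasDerivAt (fun t => f t - f x - deriv f x * (t - x)) (deriv f t - deriv f x * 1) t :=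
      ((hf t).hasDerivAt.sub_const (f x)).sub (((hasDerivAt_id' t).sub_const x).const_mul _)
    simpa using h.hasDerivWithinAt
  have hbound : ∀ t ∈ uIcc x y, ‖deriv f t - deriv f x‖ ≤ L * |y - x| ^ α := fun t ht =>
    (hHolder t x).trans <|
      mul_le_mul_of_nonneg_left (Real.rpow_le_rpow (abs_nonneg _) (abs_sub_left_of_mem_uIcc ht) hα) hL
  have hmvt := (convex_uIcc x y).norm_image_sub_le_of_norm_hasDerivWithin_le hderiv hbound
    left_mem_uIcc right_mem_uIcc
  rw [Real.rpow_add' (abs_nonneg _) (by linarith), Real.rpow_one, mul_left_comm]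
  simpa [mul_comm] using hmvt

theorem abs_sub_rpow_le (x y : ℝ) {p : ℝ} (hp : 1 ≤ p) :
    |y - x| ^ p ≤ 2 ^ (p - 1) * (|x| ^ p + |y| ^ p) := calc
  |y - x| ^ p ≤ (|x| + |y|) ^ p := by
    gcongr; exact (abs_sub _ _).trans_eq (add_comm _ _)
  _ ≤ 2 ^ (p - 1) * (|x| ^ p + |y| ^ p) := by
    exact_mod_cast NNReal.rpow_add_le_mul_rpow_add_rpow ‖x‖₊ ‖y‖₊ hp

theorem abs_le_one_add_rpow (x : ℝ) {p : ℝ} (hp : 1 ≤ p) : |x| ≤ 1 + |x| ^ p := by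
  rcases le_total |x| 1 with hx | hx
  · linarith [Real.rpow_nonneg (abs_nonneg x) p]
  · linarith [Real.self_le_rpow_of_one_le hx hp]

section ProbabilityMeasure

variable {ν : Measure ℝ} [IsProbabilityMeasure ν]

theorem abs_integral_id_le_one_add_integral_rpow {p : ℝ} (hp : 1 ≤ p)
    (hmom : Integrable (fun x => |x| ^ p) ν) :
    |∫ x, x ∂ν| ≤ 1 + ∫ x, |x| ^ p ∂ν := by
  have hbound : Integrable (fun x => 1 + |x| ^ p) ν := (integrable_const 1).add hmom
  have := norm_integral_le_of_norm_le (f := fun x => x) hbound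
    (ae_of_all ν fun x => abs_le_one_add_rpow x hp)
  rwa [integral_add (integrable_const 1) hmom, integral_const, probReal_univ, one_smul] at this

theorem abs_integral_sub_sub_deriv_mul_le {f : ℝ → ℝ} (hf : Differentiable ℝ f) {L α : ℝ}
    (hL : 0 ≤ L) (hα : 0 ≤ α) (hHolder : ∀ x y, |deriv f x - deriv f y| ≤ L * |x - y| ^ α)
    (hfi : Integrable f ν) (hid : Integrable (fun x : ℝ => x) ν)
    (hmom : Integrable (fun x => |x| ^ (1 + α)) ν) (x : ℝ) :
    |∫ y, f y ∂ν - f x - deriv f x * (∫ y, y ∂ν - x)| ≤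
      L * 2 ^ α * (|x| ^ (1 + α) + ∫ y, |y| ^ (1 + α) ∂ν) := by
  have hfx : Integrable (fun y => f y - f x) ν := hfi.sub (integrable_const _)
  have hlin : Integrable (fun y => deriv f x * (y - x)) ν :=
    (hid.sub (integrable_const _)).const_mul _
  have hbound : Integrable (fun y => L * 2 ^ α * (|x| ^ (1 + α) + |y| ^ (1 + α))) ν :=
    ((integrable_const _).add hmom).const_mul _
  have hle : ∀ y, |f y - f x - deriv f x * (y - x)| ≤ L * 2 ^ α * (|x| ^ (1 + α) + |y| ^ (1 + α)) :=
    fun y => (abs_sub_sub_deriv_mul_le_of_holder hf hL hα hHolder x y).trans <| by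
      rw [mul_assoc]
      have := abs_sub_rpow_le x y (le_add_of_nonneg_right hα)
      rw [add_sub_cancel_left] at this
      exact mul_le_mul_of_nonneg_left this hL
  have := norm_integral_le_of_norm_le (f := fun y => f y - f x - deriv f x * (y - x)) hbound
    (ae_of_all ν hle)
  rwa [integral_sub hfx hlin,
    integral_sub hfi (integrable_const _), integral_const_mul, integral_sub hid (integrable_const _),
    integral_const_mul, integral_add (integrable_const _) hmom, integral_const, integral_const,
    integral_const, probReal_univ, one_smul, one_smul, one_smul] at this

theorem abs_integral_le_of_abs_sub_centered_le {h f R : ℝ → ℝ} (hh : Integrable h ν)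
    (hf : Integrable f ν) (hR : Integrable R ν) (hle : ∀ x, |h x - (f x - ∫ y, f y ∂ν)| ≤ R x) :
    |∫ x, h x ∂ν| ≤ ∫ x, R x ∂ν := by
  have hcentered : ∫ x, (f x - ∫ y, f y ∂ν) ∂ν = 0 := by
    rw [integral_sub hf (integrable_const _), integral_const, probReal_univ, one_smul, sub_self]
  have hfc : Integrable (fun x => f x - ∫ y, f y ∂ν) ν := hf.sub (integrable_const _)
  have := norm_integral_le_of_norm_le (f := fun x => h x - (f x - ∫ y, f y ∂ν)) hR (ae_of_all ν hle)
  rwa [integral_sub hh hfc, hcentered, sub_zero] at this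

end ProbabilityMeasure

section Supremum

variable {ι : Type*} {s : Set ι} {F m : ι → ℝ}

theorem bddAbove_image_const_mul_of_abs_le {B : ℝ} (hm : ∀ i ∈ s, |m i| ≤ B) (a : ℝ) :
    BddAbove ((fun i => a * m i) '' s) := by
  refine ⟨|a| * B, ?_⟩
  rintro _ ⟨i, hi, rfl⟩
  calc a * m i ≤ |a| * |m i| := (le_abs_self _).trans_eq (abs_mul _ _)
    _ ≤ |a| * B := mul_le_mul_of_nonneg_left (hm i hi) (abs_nonneg a)

theorem bddAbove_image_of_abs_sub_mul_le {B c a r : ℝ} (hm : ∀ i ∈ s, |m i| ≤ B)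
    (h : ∀ i ∈ s, |F i - c - a * m i| ≤ r) : BddAbove (F '' s) := by
  obtain ⟨b, hb⟩ := bddAbove_image_const_mul_of_abs_le hm a
  refine ⟨c + b + r, ?_⟩
  rintro _ ⟨i, hi, rfl⟩
  linarith [(abs_le.1 (h i hi)).2, hb ⟨i, hi, rfl⟩]

theorem abs_mul_sub_sSup_sub_le {μ : ι} (hμ : μ ∈ s) (hF : ∀ i ∈ s, F i ≤ F μ) {a c x r : ℝ}
    (hbdd : BddAbove ((fun i => a * m i) '' s)) (h : ∀ i ∈ s, |F i - c - a * (m i - x)| ≤ r) :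
    |x * a - sSup ((fun i => a * m i) '' s) - (c - F μ)| ≤ r := by
  have hge : a * m μ ≤ sSup ((fun i => a * m i) '' s) := le_csSup hbdd ⟨μ, hμ, rfl⟩
  have hle : sSup ((fun i => a * m i) '' s) ≤ F μ - c + a * x + r := by
    refine csSup_le ⟨_, μ, hμ, rfl⟩ ?_
    rintro _ ⟨i, hi, rfl⟩
    linarith [(abs_le.1 (h i hi)).1, hF i hi]
  rw [abs_le]
  constructor <;> linarith [abs_le.1 (h μ hμ)]

end Supremum

theorem stein_estimate_general
    (α : ℝ) (hα : 0 < α) (hα1 : α ≤ 1)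
    (Θ : Set (Measure ℝ))
    (hprob : ∀ μ ∈ Θ, IsProbabilityMeasure μ)
    (hmomInt : ∀ μ ∈ Θ, Integrable (fun x => |x| ^ (1 + α)) μ)
    (hmomBdd : BddAbove ((fun μ => ∫ x, |x| ^ (1 + α) ∂μ) '' Θ))
    (φ : ℝ → ℝ) (hC1 : ContDiff ℝ 1 φ)
    (L : ℝ) (hL : 0 ≤ L)
    (hHolder : ∀ x y, |deriv φ x - deriv φ y| ≤ L * |x - y| ^ α)
    (hφInt : ∀ μ ∈ Θ, Integrable φ μ)
    (hidInt : ∀ μ ∈ Θ, Integrable (fun x : ℝ => x) μ)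
    (p : ℝ → ℝ) (hp : ∀ a, p a = sSup ((fun μ => ∫ x, a * x ∂μ) '' Θ))
    (μ : Measure ℝ) (hμ : μ ∈ Θ)
    (hattain : ∫ x, φ x ∂μ = sSup ((fun ν => ∫ x, φ x ∂ν) '' Θ))
    (hInt : Integrable (fun x => x * deriv φ x - p (deriv φ x)) μ) :
    |∫ x, (x * deriv φ x - p (deriv φ x)) ∂μ| ≤
      4 * L * sSup ((fun ν => ∫ x, |x| ^ (1 + α) ∂ν) '' Θ) := by
  set M := sSup ((fun ν => ∫ x, |x| ^ (1 + α) ∂ν) '' Θ)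
  have := hprob μ hμ
  have hmoment : ∀ ν ∈ Θ, ∫ x, |x| ^ (1 + α) ∂ν ≤ M := fun ν hν => le_csSup hmomBdd ⟨ν, hν, rfl⟩
  have hmean : ∀ ν ∈ Θ, |∫ x, x ∂ν| ≤ 1 + M := fun ν hν =>
    have := hprob ν hν
    (abs_integral_id_le_one_add_integral_rpow (by linarith) (hmomInt ν hν)).trans
      (by linarith [hmoment ν hν])
  have htaylor : ∀ ν ∈ Θ, ∀ x, |∫ y, φ y ∂ν - φ x - deriv φ x * (∫ y, y ∂ν - x)| ≤
      L * 2 ^ α * (|x| ^ (1 + α) + M) := fun ν hν x =>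
    have := hprob ν hν
    (abs_integral_sub_sub_deriv_mul_le (hC1.differentiable one_ne_zero) hL hα.le hHolder
      (hφInt ν hν) (hidInt ν hν) (hmomInt ν hν) x).trans (by gcongr; exact hmoment ν hν)
  have hmax : ∀ ν ∈ Θ, ∫ y, φ y ∂ν ≤ ∫ y, φ y ∂μ := fun ν hν =>
    hattain ▸ le_csSup (bddAbove_image_of_abs_sub_mul_le hmean fun ν hν => by
      simpa only [sub_zero] using htaylor ν hν 0) ⟨ν, hν, rfl⟩
  have hpoint : ∀ x, |x * deriv φ x - p (deriv φ x) - (φ x - ∫ y, φ y ∂μ)| ≤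
      L * 2 ^ α * (|x| ^ (1 + α) + M) := fun x => by
    simp only [hp, integral_const_mul (deriv φ x) fun y : ℝ => y]
    exact abs_mul_sub_sSup_sub_le hμ hmax (bddAbove_image_const_mul_of_abs_le hmean _)
      fun ν hν => htaylor ν hν x
  have h2α : (2 : ℝ) ^ α ≤ 2 := by
    simpa using Real.rpow_le_rpow_of_exponent_le one_le_two hα1
  calc |∫ x, (x * deriv φ x - p (deriv φ x)) ∂μ|
      ≤ ∫ x, L * 2 ^ α * (|x| ^ (1 + α) + M) ∂μ :=
        abs_integral_le_of_abs_sub_centered_le hInt (hφInt μ hμ)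
          (((hmomInt μ hμ).add (integrable_const M)).const_mul _) hpoint
    _ = L * 2 ^ α * (∫ x, |x| ^ (1 + α) ∂μ + M) := by
        rw [integral_const_mul, integral_add (hmomInt μ hμ) (integrable_const M), integral_const,
          probReal_univ, one_smul]
    _ ≤ L * 2 * (M + M) := by
        have : 0 ≤ ∫ x, |x| ^ (1 + α) ∂μ := integral_nonneg fun x => by positivity
        gcongr
        · linarith [hmoment μ hμ]
        · exact hmoment μ hμ
    _ = 4 * L * M := by ring

theorem stein_estimate
    (α : ℝ) (hα : 0 < α) (hα1 : α ≤ 1)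
    (Θ : Set (Measure ℝ)) (hne : Θ.Nonempty)
    (hprob : ∀ μ ∈ Θ, IsProbabilityMeasure μ)
    (hmomInt : ∀ μ ∈ Θ, Integrable (fun x => |x| ^ (1 + α)) μ)
    (hmomBdd : BddAbove ((fun μ => ∫ x, |x| ^ (1 + α) ∂μ) '' Θ))
    (φ : ℝ → ℝ) (hC1 : ContDiff ℝ 1 φ)
    (L : ℝ) (hL : 0 ≤ L)
    (hHolder : ∀ x y, |deriv φ x - deriv φ y| ≤ L * |x - y| ^ α)
    (hφInt : ∀ μ ∈ Θ, Integrable φ μ)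
    (hidInt : ∀ μ ∈ Θ, Integrable (fun x : ℝ => x) μ)
    (p : ℝ → ℝ) (hp : ∀ a, p a = sSup ((fun μ => ∫ x, a * x ∂μ) '' Θ))
    (μ : Measure ℝ) (hμ : μ ∈ Θ)
    (hattain : ∫ x, φ x ∂μ = sSup ((fun ν => ∫ x, φ x ∂ν) '' Θ))
    (hInt : Integrable (fun x => x * deriv φ x - p (deriv φ x)) μ) :
    |∫ x, (x * deriv φ x - p (deriv φ x)) ∂μ| ≤
      4 * L * sSup ((fun ν => ∫ x, |x| ^ (1 + α) ∂ν) '' Θ) :=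
  stein_estimate_general α hα hα1 Θ hprob hmomInt hmomBdd φ hC1 L hL hHolder hφInt hidInt p hp μ hμ
    hattain hInt
end

section
/- Let Θ be a nonempty set of Borel probability measures on ℝ with sup_{μ ∈ Θ} ∫ |x|^{1+α} dμ = M < ∞, α ∈ (0,1], and set N[ψ] = sup_{μ∈Θ} ∫ ψ dμ, p(a) = sup_{μ∈Θ} ∫ a x dμ. Let φ : ℝ → ℝ be C¹ with α-Hölder derivative of seminorm [φ']_α. Then |N[φ] − φ(0) − p(φ'(0))| ≤ [φ']_α · M. -/
/-!
A first-order Taylor expansion with α-Hölder remainder gives, pointwise,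
`|φ x - φ 0 - φ'(0) x| ≤ [φ']_α |x|^(1+α)`. Integrating against each `μ ∈ Θ` and using the
moment bound, the maps `μ ↦ ∫ φ dμ` and `μ ↦ φ 0 + ∫ φ'(0) x dμ` differ by at most `[φ']_α M`
uniformly on `Θ`, hence so do their suprema.
-/

open Set MeasureTheory

lemma abs_sub_sub_deriv_mul_le_of_holder_deriv {f : ℝ → ℝ} {α L : ℝ} (hα : 0 ≤ α) (hL : 0 ≤ L)
    (hf : Differentiable ℝ f) (a : ℝ)
    (hf' : ∀ t, |deriv f t - deriv f a| ≤ L * |t - a| ^ α) (x : ℝ) :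
    |f x - f a - deriv f a * (x - a)| ≤ L * |x - a| ^ (1 + α) := by
  set g : ℝ → ℝ := fun t => f t - deriv f a * t
  have hg : ∀ t, HasDerivAt g (deriv f t - deriv f a) t := fun t => by
    have := (hf t).hasDerivAt.sub ((hasDerivAt_id' t).const_mul (deriv f a))
    rwa [mul_one] at this
  have hg' : ∀ t ∈ uIcc a x, ‖deriv g t‖ ≤ L * |x - a| ^ α := fun t ht => by
    rw [(hg t).deriv, Real.norm_eq_abs]
    exact (hf' t).trans <| mul_le_mul_of_nonneg_left
      (Real.rpow_le_rpow (abs_nonneg _) (abs_sub_left_of_mem_uIcc ht) hα) hL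
  have hmvt := (convex_uIcc a x).norm_image_sub_le_of_norm_deriv_le
    (fun t _ => (hg t).differentiableAt) hg' left_mem_uIcc right_mem_uIcc
  calc |f x - f a - deriv f a * (x - a)| = ‖g x - g a‖ := by
        rw [Real.norm_eq_abs]; congr 1; simp only [g]; ring
    _ ≤ L * |x - a| ^ α * ‖x - a‖ := hmvt
    _ = L * |x - a| ^ (1 + α) := by
        rw [Real.rpow_one_add' (abs_nonneg _) (by linarith), Real.norm_eq_abs]; ring

lemma abs_csSup_image_sub_sub_csSup_image_le {ι : Type*} {s : Set ι} (hs : s.Nonempty)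
    {f g : ι → ℝ} {a K : ℝ} (hg : BddAbove (g '' s)) (h : ∀ i ∈ s, |f i - a - g i| ≤ K) :
    |sSup (f '' s) - a - sSup (g '' s)| ≤ K := by
  have hf : BddAbove (f '' s) := by
    obtain ⟨B, hB⟩ := hg
    refine ⟨a + B + K, forall_mem_image.2 fun i hi => ?_⟩
    linarith [(abs_le.1 (h i hi)).2, hB (mem_image_of_mem g hi)]
  have hgf : sSup (g '' s) ≤ sSup (f '' s) - a + K :=
    csSup_le (hs.image g) <| forall_mem_image.2 fun i hi => by
      linarith [(abs_le.1 (h i hi)).1, le_csSup hf (mem_image_of_mem f hi)]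
  have hfg : sSup (f '' s) ≤ a + sSup (g '' s) + K :=
    csSup_le (hs.image f) <| forall_mem_image.2 fun i hi => by
      linarith [(abs_le.1 (h i hi)).2, le_csSup hg (mem_image_of_mem g hi)]
  exact abs_le.2 ⟨by linarith, by linarith⟩

lemma abs_integral_sub_sub_integral_le {μ : Measure ℝ} [IsProbabilityMeasure μ]
    {f g w : ℝ → ℝ} {a : ℝ} (hf : Integrable f μ) (hg : Integrable g μ) (hw : Integrable w μ)
    (h : ∀ x, |f x - a - g x| ≤ w x) :
    |∫ x, f x ∂μ - a - ∫ x, g x ∂μ| ≤ ∫ x, w x ∂μ := by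
  have hsplit : ∫ x, (f x - a - g x) ∂μ = ∫ x, f x ∂μ - a - ∫ x, g x ∂μ := by
    have hfa : Integrable (fun x => f x - a) μ := hf.sub (integrable_const a)
    rw [integral_sub hfa hg, integral_sub hf (integrable_const a),
      integral_const, probReal_univ, one_smul]
  rw [← hsplit]
  exact norm_integral_le_of_norm_le (f := fun x => f x - a - g x) hw (ae_of_all μ h)

lemma abs_le_one_add_abs_rpow {β : ℝ} (hβ : 1 ≤ β) (x : ℝ) : |x| ≤ 1 + |x| ^ β := by
  rcases le_or_gt |x| 1 with hx | hx
  · linarith [Real.rpow_nonneg (abs_nonneg x) β]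
  · linarith [Real.self_le_rpow_of_one_le hx.le hβ]

lemma abs_integral_id_le_one_add_integral_abs_rpow {μ : Measure ℝ} [IsProbabilityMeasure μ]
    {β : ℝ} (hβ : 1 ≤ β) (hmom : Integrable (fun x => |x| ^ β) μ) :
    |∫ x, x ∂μ| ≤ 1 + ∫ x, |x| ^ β ∂μ := by
  have hbound := norm_integral_le_of_norm_le (f := fun x => x)
    (g := fun x => 1 + |x| ^ β) ((integrable_const 1).add hmom)
    (ae_of_all μ (abs_le_one_add_abs_rpow hβ))
  rwa [integral_add (integrable_const 1) hmom, integral_const, probReal_univ, one_smul] at hbound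

theorem stein_first_order_estimate_general
    (α : ℝ) (hα : 0 < α)
    (M : ℝ)
    (Θ : Set (Measure ℝ)) (hne : Θ.Nonempty)
    (hprob : ∀ μ ∈ Θ, IsProbabilityMeasure μ)
    (hmomInt : ∀ μ ∈ Θ, Integrable (fun x => |x| ^ (1 + α)) μ)
    (hmomBdd : ∀ μ ∈ Θ, ∫ x, |x| ^ (1 + α) ∂μ ≤ M)
    (φ : ℝ → ℝ) (hC1 : ContDiff ℝ 1 φ)
    (L : ℝ) (hL : 0 ≤ L)
    (hHolder : ∀ x y, |deriv φ x - deriv φ y| ≤ L * |x - y| ^ α)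
    (hφInt : ∀ μ ∈ Θ, Integrable φ μ)
    (hidInt : ∀ μ ∈ Θ, Integrable (fun x : ℝ => x) μ)
    (p : ℝ → ℝ) (hp : ∀ a, p a = sSup ((fun μ => ∫ x, a * x ∂μ) '' Θ)) :
    |sSup ((fun μ => ∫ x, φ x ∂μ) '' Θ) - φ 0 - p (deriv φ 0)| ≤ L * M := by
  set c := deriv φ 0
  have hTaylor (x : ℝ) : |φ x - φ 0 - c * x| ≤ L * |x| ^ (1 + α) := by
    simpa using abs_sub_sub_deriv_mul_le_of_holder_deriv hα.le hL
      (hC1.differentiable one_ne_zero) 0 (fun t => hHolder t 0) x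
  have hclose : ∀ μ ∈ Θ, |∫ x, φ x ∂μ - φ 0 - ∫ x, c * x ∂μ| ≤ L * M := fun μ hμ => by
    have := hprob μ hμ
    calc _ ≤ ∫ x, L * |x| ^ (1 + α) ∂μ := abs_integral_sub_sub_integral_le (hφInt μ hμ)
            ((hidInt μ hμ).const_mul c) ((hmomInt μ hμ).const_mul L) hTaylor
      _ = L * ∫ x, |x| ^ (1 + α) ∂μ := integral_const_mul L _
      _ ≤ L * M := mul_le_mul_of_nonneg_left (hmomBdd μ hμ) hL
  have hbdd : BddAbove ((fun μ => ∫ x, c * x ∂μ) '' Θ) := by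
    refine ⟨|c| * (1 + M), forall_mem_image.2 fun μ hμ => ?_⟩
    have := hprob μ hμ
    calc ∫ x, c * x ∂μ ≤ |c| * |∫ x, x ∂μ| := by
          rw [integral_const_mul, ← abs_mul]; exact le_abs_self _
      _ ≤ |c| * (1 + M) := mul_le_mul_of_nonneg_left ((abs_integral_id_le_one_add_integral_abs_rpow
          (by linarith) (hmomInt μ hμ)).trans (by linarith [hmomBdd μ hμ])) (abs_nonneg c)
  rw [hp]
  exact abs_csSup_image_sub_sub_csSup_image_le hne hbdd hclose

theorem stein_first_order_estimate
    (α : ℝ) (hα : 0 < α) (hα1 : α ≤ 1)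
    (M : ℝ)
    (Θ : Set (Measure ℝ)) (hne : Θ.Nonempty)
    (hprob : ∀ μ ∈ Θ, IsProbabilityMeasure μ)
    (hmomInt : ∀ μ ∈ Θ, Integrable (fun x => |x| ^ (1 + α)) μ)
    (hmomBdd : ∀ μ ∈ Θ, ∫ x, |x| ^ (1 + α) ∂μ ≤ M)
    (φ : ℝ → ℝ) (hC1 : ContDiff ℝ 1 φ)
    (L : ℝ) (hL : 0 ≤ L)
    (hHolder : ∀ x y, |deriv φ x - deriv φ y| ≤ L * |x - y| ^ α)
    (hφInt : ∀ μ ∈ Θ, Integrable φ μ)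
    (hidInt : ∀ μ ∈ Θ, Integrable (fun x : ℝ => x) μ)
    (p : ℝ → ℝ) (hp : ∀ a, p a = sSup ((fun μ => ∫ x, a * x ∂μ) '' Θ)) :
    |sSup ((fun μ => ∫ x, φ x ∂μ) '' Θ) - φ 0 - p (deriv φ 0)| ≤ L * M :=
  stein_first_order_estimate_general α hα M Θ hne hprob hmomInt hmomBdd φ hC1 L hL hHolder hφInt
    hidInt p hp
end

section
/- Let μ̲ ≤ μ̄, let φ : ℝ → ℝ be bounded and 1-Lipschitz, and let v(x,t) = sup_{y∈[μ̲,μ̄]} φ(x + t y). Let ζ_ε be a mollifier as above and v_ε = v * ζ_ε. Then for all t > ε and δ > 0, v_ε(x, t + δ) ≥ sup_{y∈[μ̲,μ̄]} v_ε(x + δ y, t); consequently, wherever v_ε is differentiable with t > ε, ∂_t v_ε(x,t) − p(∂_x v_ε(x,t)) ≥ 0, where p(a) = max(a μ̄, a μ̲). -/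
open Set MeasureTheory

theorem mollified_supersolution
    (μl μu : ℝ) (hμ : μl ≤ μu)
    (φ : ℝ → ℝ) (hb : ∃ B, ∀ x, |φ x| ≤ B) (hlip : LipschitzWith 1 φ)
    (v : ℝ → ℝ → ℝ)
    (hv : ∀ x t : ℝ, 0 ≤ t → v x t = sSup ((fun y => φ (x + t * y)) '' Icc μl μu))
    (hvneg : ∀ x t : ℝ, t < 0 → v x t = φ x)
    (ζ : ℝ × ℝ → ℝ)
    (hζsmooth : ContDiff ℝ (⊤ : ℕ∞) ζ)
    (hζpos : ∀ p, 0 ≤ ζ p)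
    (hζsupp : ∀ p : ℝ × ℝ, ζ p ≠ 0 → |p.1| < 1 ∧ 0 < p.2 ∧ p.2 < 1)
    (hζint : ∫ p : ℝ × ℝ, ζ p = 1)
    (ε : ℝ) (hε : ε ∈ Ioo (0 : ℝ) 1)
    (vε : ℝ → ℝ → ℝ)
    (hvε : ∀ x t, vε x t =
      ∫ p : ℝ × ℝ, v (x - p.1) (t - p.2) * (ε ^ (-2 : ℤ) * ζ (p.1 / ε, p.2 / ε))) :
    (∀ x t δ : ℝ, ε < t → 0 < δ →
      sSup ((fun y => vε (x + δ * y) t) '' Icc μl μu) ≤ vε x (t + δ)) ∧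
    (∀ x t : ℝ, ε < t → ∀ vt vx : ℝ,
      HasDerivAt (fun s => vε x s) vt t →
      HasDerivAt (fun z => vε z t) vx x →
      0 ≤ vt - max (vx * μu) (vx * μl)) := by
  obtain ⟨B, hB⟩ := hb
  obtain ⟨hε0, hε1⟩ := hε
  set M : ℝ := max |μl| |μu| with hM
  have hM0 : 0 ≤ M := le_trans (abs_nonneg _) (le_max_left _ _)
  have hyM : ∀ y ∈ Icc μl μu, |y| ≤ M := by
    rintro y ⟨h1, h2⟩
    rcases abs_cases y with ⟨h, _⟩ | ⟨h, _⟩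
    · rw [h]; exact le_trans h2 (le_trans (le_abs_self _) (le_max_right _ _))
    · rw [h]; exact le_trans (neg_le_neg h1) (le_trans (neg_le_abs _) (le_max_left _ _))
  have hne : (Icc μl μu).Nonempty := nonempty_Icc.2 hμ
  have hbdd : ∀ x t : ℝ, BddAbove ((fun y => φ (x + t * y)) '' Icc μl μu) := by
    intro x t
    refine ⟨B, ?_⟩
    rintro _ ⟨y, hy, rfl⟩
    exact (abs_le.1 (hB _)).2
  -- monotonicity property of v
  have hmono : ∀ x t δ y : ℝ, 0 ≤ t → 0 ≤ δ → y ∈ Icc μl μu →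
      v (x + δ * y) t ≤ v x (t + δ) := by
    intro x t δ y ht hδ hy
    rw [hv _ _ ht, hv _ _ (by linarith)]
    refine csSup_le (hne.image _) ?_
    rintro _ ⟨y', hy', rfl⟩
    show φ (x + δ * y + t * y') ≤ _
    rcases eq_or_lt_of_le (by linarith : (0:ℝ) ≤ t + δ) with h0 | hpos
    · have ht0 : t = 0 := by linarith
      have hδ0 : δ = 0 := by linarith
      have he : φ (x + δ * y + t * y') = φ (x + (t + δ) * μl) := by
        rw [ht0, hδ0]; ring_nf
      rw [he]
      exact le_csSup (hbdd _ _) ⟨μl, ⟨le_rfl, hμ⟩, rfl⟩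
    · set y'' : ℝ := (δ * y + t * y') / (t + δ) with hy''def
      have hy'' : y'' ∈ Icc μl μu := by
        constructor
        · rw [le_div_iff₀ hpos]; nlinarith [hy.1, hy'.1]
        · rw [div_le_iff₀ hpos]; nlinarith [hy.2, hy'.2]
      have he : x + δ * y + t * y' = x + (t + δ) * y'' := by
        rw [hy''def, mul_div_cancel₀ _ hpos.ne', ← add_assoc]
      rw [he]
      exact le_csSup (hbdd _ _) ⟨y'', hy'', rfl⟩
  -- v at 0 and Lipschitz estimates
  have hv0 : ∀ x, v x 0 = φ x := by
    intro x
    rw [hv x 0 le_rfl]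
    have : (fun y => φ (x + 0 * y)) '' Icc μl μu = {φ x} := by
      ext z
      simp only [Set.mem_image, Set.mem_singleton_iff]
      constructor
      · rintro ⟨y, _, rfl⟩; simp
      · rintro rfl; exact ⟨μl, ⟨le_rfl, hμ⟩, by simp⟩
    rw [this, csSup_singleton]
  have hvmax : ∀ x t : ℝ, v x t = v x (max t 0) := by
    intro x t
    rcases lt_or_ge t 0 with h | h
    · rw [hvneg x t h, max_eq_right h.le, hv0]
    · rw [max_eq_left h]
  have hlipv : ∀ x x' t t' : ℝ, 0 ≤ t → 0 ≤ t' →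
      v x t ≤ v x' t' + (|x - x'| + M * |t - t'|) := by
    intro x x' t t' ht ht'
    rw [hv _ _ ht, hv _ _ ht']
    refine csSup_le (hne.image _) ?_
    rintro _ ⟨y, hy, rfl⟩
    have hd : |φ (x + t * y) - φ (x' + t' * y)| ≤ |x - x'| + M * |t - t'| := by
      have h1 := hlip.dist_le_mul (x + t * y) (x' + t' * y)
      rw [Real.dist_eq, Real.dist_eq] at h1
      have h2 : |x + t * y - (x' + t' * y)| ≤ |x - x'| + |t - t'| * |y| := by
        have : x + t * y - (x' + t' * y) = (x - x') + (t - t') * y := by ring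
        rw [this]
        exact le_trans (abs_add_le _ _) (by rw [abs_mul])
      have h3 : |t - t'| * |y| ≤ M * |t - t'| := by
        rw [mul_comm]
        exact mul_le_mul_of_nonneg_right (hyM y hy) (abs_nonneg _)
      norm_num at h1
      linarith
    have h4 : φ (x + t * y) ≤ φ (x' + t' * y) + (|x - x'| + M * |t - t'|) := by
      have := (abs_le.1 hd).2
      linarith
    refine le_trans h4 (add_le_add_left ?_ _)
    exact le_csSup (hbdd _ _) ⟨y, hy, rfl⟩
  -- continuity of v
  have hvcont : Continuous (fun p : ℝ × ℝ => v p.1 p.2) := by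
    have hF : LipschitzWith ⟨1 + M, by positivity⟩ (fun p : ℝ × ℝ => v p.1 (max p.2 0)) := by
      apply LipschitzWith.of_dist_le_mul
      intro p q
      rw [Real.dist_eq, Prod.dist_eq]
      change _ ≤ (1 + M) * _
      have hle : ∀ a b : ℝ × ℝ,
          v a.1 (max a.2 0) - v b.1 (max b.2 0) ≤ (1 + M) * max (dist a.1 b.1) (dist a.2 b.2) := by
        intro a b
        have h1 := hlipv a.1 b.1 (max a.2 0) (max b.2 0) (le_max_right _ _) (le_max_right _ _)
        have h2 : |max a.2 0 - max b.2 0| ≤ |a.2 - b.2| := abs_max_sub_max_le_abs _ _ _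
        have h3 : |a.1 - b.1| ≤ max (dist a.1 b.1) (dist a.2 b.2) := by
          rw [Real.dist_eq]; exact le_max_left _ _
        have h4 : |a.2 - b.2| ≤ max (dist a.1 b.1) (dist a.2 b.2) := by
          rw [show dist a.2 b.2 = |a.2 - b.2| from Real.dist_eq _ _]; exact le_max_right _ _
        have h5 : M * |max a.2 0 - max b.2 0| ≤ M * max (dist a.1 b.1) (dist a.2 b.2) :=
          mul_le_mul_of_nonneg_left (le_trans h2 h4) hM0
        nlinarith
      rw [abs_sub_le_iff]
      constructor
      · exact hle p q
      · have := hle q p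
        rw [dist_comm q.1 p.1, dist_comm q.2 p.2] at this
        exact this
    have heq : (fun p : ℝ × ℝ => v p.1 p.2) = (fun p : ℝ × ℝ => v p.1 (max p.2 0)) := by
      funext p; exact hvmax p.1 p.2
    rw [heq]
    exact hF.continuous
  -- the mollifier kernel
  have hζcont : Continuous ζ := hζsmooth.continuous
  have hksupp : HasCompactSupport
      (fun p : ℝ × ℝ => ε ^ (-2 : ℤ) * ζ (p.1 / ε, p.2 / ε)) := by
    apply HasCompactSupport.intro (isCompact_Icc (a := ((-ε, -ε) : ℝ × ℝ)) (b := ((ε, ε) : ℝ × ℝ)))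
    intro p hp
    by_contra h
    have hz : ζ (p.1 / ε, p.2 / ε) ≠ 0 := by
      intro h0; apply h; rw [h0, mul_zero]
    obtain ⟨h1, h2, h3⟩ := hζsupp _ hz
    apply hp
    have ha1 : -(1:ℝ) < p.1 / ε := (abs_lt.1 h1).1
    have ha2 : p.1 / ε < 1 := (abs_lt.1 h1).2
    have hb1 : p.1 < ε := (div_lt_one hε0).1 ha2
    have hc1 : p.1 / ε * ε = p.1 := div_mul_cancel₀ _ (ne_of_gt hε0)
    have hc2 : p.2 / ε * ε = p.2 := div_mul_cancel₀ _ (ne_of_gt hε0)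
    have hb2 : -ε < p.1 := by nlinarith [mul_lt_mul_of_pos_right ha1 hε0]
    have hb3 : 0 < p.2 := by nlinarith [mul_pos h2 hε0]
    have hb4 : p.2 < ε := (div_lt_one hε0).1 h3
    simp only [Set.mem_Icc, Prod.le_def]
    exact ⟨⟨hb2.le, by linarith⟩, ⟨hb1.le, hb4.le⟩⟩
  have hkcont : Continuous (fun p : ℝ × ℝ => ε ^ (-2 : ℤ) * ζ (p.1 / ε, p.2 / ε)) := by
    exact continuous_const.mul (hζcont.comp (by fun_prop))
  have hknn : ∀ p : ℝ × ℝ, 0 ≤ ε ^ (-2 : ℤ) * ζ (p.1 / ε, p.2 / ε) := by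
    intro p
    exact mul_nonneg (by positivity) (hζpos _)
  have hinteg : ∀ x t : ℝ, Integrable
      (fun p : ℝ × ℝ => v (x - p.1) (t - p.2) * (ε ^ (-2 : ℤ) * ζ (p.1 / ε, p.2 / ε))) := by
    intro x t
    apply Continuous.integrable_of_hasCompactSupport
    · exact ((hvcont.comp (by fun_prop : Continuous (fun p : ℝ × ℝ => (x - p.1, t - p.2))))).mul hkcont
    · exact hksupp.mul_left
  -- key pointwise inequality for vε
  have hkey : ∀ x t δ y : ℝ, ε < t → 0 ≤ δ → y ∈ Icc μl μu →
      vε (x + δ * y) t ≤ vε x (t + δ) := by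
    intro x t δ y ht hδ hy
    rw [hvε, hvε]
    refine integral_mono (hinteg _ _) (hinteg _ _) ?_
    intro p
    rcases eq_or_ne (ζ (p.1 / ε, p.2 / ε)) 0 with h | h
    · simp [h]
    · obtain ⟨_, h2, h3⟩ := hζsupp _ h
      have hp2 : p.2 < ε := (div_lt_one hε0).1 h3
      have ht2 : 0 ≤ t - p.2 := by linarith
      have hv1 : v (x + δ * y - p.1) (t - p.2) ≤ v (x - p.1) (t + δ - p.2) := by
        have h5 := hmono (x - p.1) (t - p.2) δ y ht2 hδ hy
        rw [show x - p.1 + δ * y = x + δ * y - p.1 from by ring,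
          show t - p.2 + δ = t + δ - p.2 from by ring] at h5
        exact h5
      exact mul_le_mul_of_nonneg_right hv1 (hknn p)
  constructor
  · intro x t δ ht hδ
    refine csSup_le (hne.image _) ?_
    rintro _ ⟨y, hy, rfl⟩
    exact hkey x t δ y ht hδ.le hy
  · intro x t ht vt vx hvt hvx
    have main : ∀ y ∈ Icc μl μu, vx * y ≤ vt := by
      intro y hy
      set f : ℝ → ℝ := fun δ => vε x (t + δ) - vε (x + δ * y) t with hfdef
      have hf0 : f 0 = 0 := by simp [hfdef]
      have h1 : HasDerivAt (fun δ : ℝ => vε x (t + δ)) vt 0 := by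
        have hin : HasDerivAt (fun δ : ℝ => t + δ) 1 0 := (hasDerivAt_id 0).const_add t
        have hvt' : HasDerivAt (fun s => vε x s) vt ((fun δ : ℝ => t + δ) 0) := by
          simpa using hvt
        have := hvt'.comp (0 : ℝ) hin
        simpa [Function.comp_def] using this
      have h2 : HasDerivAt (fun δ : ℝ => vε (x + δ * y) t) (vx * y) 0 := by
        have hin : HasDerivAt (fun δ : ℝ => x + δ * y) y 0 := by
          simpa using ((hasDerivAt_id (0:ℝ)).mul_const y).const_add x
        have hvx' : HasDerivAt (fun z => vε z t) vx ((fun δ : ℝ => x + δ * y) 0) := by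
          simpa using hvx
        have := hvx'.comp (0 : ℝ) hin
        simpa [Function.comp_def] using this
      have hfd : HasDerivAt f (vt - vx * y) 0 := h1.sub h2
      have hpos : ∀ δ : ℝ, 0 < δ → 0 ≤ f δ := by
        intro δ hδ
        exact sub_nonneg.2 (hkey x t δ y ht hδ.le hy)
      have hW : HasDerivWithinAt f (vt - vx * y) (Ioi 0) 0 := hfd.hasDerivWithinAt
      rw [hasDerivWithinAt_iff_tendsto_slope] at hW
      rw [Set.diff_singleton_eq_self (by simp : (0:ℝ) ∉ Ioi 0)] at hW
      have hnn : 0 ≤ vt - vx * y := by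
        refine ge_of_tendsto hW ?_
        filter_upwards [self_mem_nhdsWithin] with δ hδ
        have hδ0 : 0 < δ := hδ
        rw [slope_def_field]
        rw [hf0, sub_zero, sub_zero]
        exact div_nonneg (hpos δ hδ0) hδ0.le
      linarith
    have hu := main μu ⟨hμ, le_rfl⟩
    have hl := main μl ⟨le_rfl, hμ⟩
    have := max_le hu hl
    linarith
end

section
/- Let μ be a Borel probability measure on ℝ supported in [μ̲, μ̄] (μ̲ ≤ μ̄), and suppose there exists y₀ ∈ (μ̲, μ̄) such that for the function φ(x) = exp(−(x−y₀)²/2) one has: p(φ'(x)) = x φ'(x) for μ-almost every x, where p(a) = max(a μ̄, a μ̲). Then μ = δ_{y₀}, the Dirac measure at y₀. -/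
/-! Write `a = φ'(x) = (y₀ - x) φ(x)`, whose sign is that of `y₀ - x`. For `x < y₀` the maximum
`max (a μ̄) (a μ̲)` is at least `a μ̄ > a x`, and for `x > y₀` it is at least `a μ̲ > a x`; so the
Stein identity can only hold at `x = y₀`, i.e. `μ` is concentrated at `y₀`. -/

open Set MeasureTheory

lemma hasDerivAt_exp_neg_sq_sub_div_two (c x : ℝ) :
    HasDerivAt (fun x => Real.exp (-(x - c) ^ 2 / 2))
      ((c - x) * Real.exp (-(x - c) ^ 2 / 2)) x := by
  have h := ((((hasDerivAt_id' x).sub_const c).fun_pow 2).fun_neg.div_const 2).exp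
  convert h using 1
  ring

lemma mul_lt_max_mul_of_ne {l u y x c : ℝ} (hy : y ∈ Ioo l u) (hxy : x ≠ y) (hc : 0 < c) :
    x * ((y - x) * c) < max ((y - x) * c * u) ((y - x) * c * l) := by
  rcases hxy.lt_or_gt with hlt | hgt
  · have : 0 < (y - x) * c * (u - x) := mul_pos (mul_pos (by linarith) hc) (by linarith [hy.2])
    exact lt_max_of_lt_left (by linarith)
  · have : 0 < (x - y) * c * (x - l) := mul_pos (mul_pos (by linarith) hc) (by linarith [hy.1])
    exact lt_max_of_lt_right (by linarith)

lemma MeasureTheory.Measure.eq_dirac_of_ae_eq {α : Type*} [MeasurableSpace α]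
    [MeasurableSingletonClass α] {μ : Measure α} [IsProbabilityMeasure μ] {a : α}
    (h : ∀ᵐ x ∂μ, x = a) : μ = Measure.dirac a := by
  have hμ : μ = μ {a} • Measure.dirac a := by
    simpa using Measure.ae_mem_finset_iff (s := {a}) |>.1 (by simpa using h)
  have hμa : μ {a} = 1 := by simpa using (congrArg (· univ) hμ).symm
  calc μ = μ {a} • Measure.dirac a := hμ
    _ = Measure.dirac a := by rw [hμa, one_smul]

theorem stein_characterization_dirac_general
    (μl μu : ℝ)
    (y₀ : ℝ) (hy₀ : y₀ ∈ Ioo μl μu)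
    (μ : Measure ℝ) [IsProbabilityMeasure μ]
    (φ : ℝ → ℝ) (hφ : ∀ x, φ x = Real.exp (-(x - y₀) ^ 2 / 2))
    (hstein : ∀ᵐ x ∂μ, max (deriv φ x * μu) (deriv φ x * μl) = x * deriv φ x) :
    μ = Measure.dirac y₀ := by
  have hderiv (x : ℝ) : deriv φ x = (y₀ - x) * Real.exp (-(x - y₀) ^ 2 / 2) := by
    rw [funext hφ]
    exact (hasDerivAt_exp_neg_sq_sub_div_two y₀ x).deriv
  refine Measure.eq_dirac_of_ae_eq ?_
  filter_upwards [hstein] with x hx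
  by_contra hxy
  rw [hderiv] at hx
  exact (mul_lt_max_mul_of_ne hy₀ hxy (Real.exp_pos _)).ne' hx

theorem stein_characterization_dirac
    (μl μu : ℝ) (hμ : μl ≤ μu)
    (y₀ : ℝ) (hy₀ : y₀ ∈ Ioo μl μu)
    (μ : Measure ℝ) [IsProbabilityMeasure μ]
    (hsupp : μ (Icc μl μu)ᶜ = 0)
    (φ : ℝ → ℝ) (hφ : ∀ x, φ x = Real.exp (-(x - y₀) ^ 2 / 2))
    (hstein : ∀ᵐ x ∂μ, max (deriv φ x * μu) (deriv φ x * μl) = x * deriv φ x) :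
    μ = Measure.dirac y₀ :=
  stein_characterization_dirac_general μl μu y₀ hy₀ μ φ hφ hstein
end
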